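/- arXiv:1903.01433 — 3 statements merged into one kernel-verified Lean document; each statement's English description precedes it below -/
import Mathlib

section
/- Fix B > 0, ρ_A, ρ_E > 0, δ ∈ (0, 1/2), and K_E a positive integer. Define, for N > 0, ϖ₁(N) = exp(Q^{−1}(δ)/√N + (B/N)·ln 2), ϖ₂(N) = ϖ₁(N)/ρ_A + 1/ρ_E, and T(N) = (B/N)·(ρ_E·ϖ₂(N))^{−K_E}·e^{−(ϖ₁(N)−1)/ρ_A}. Then the function Ξ(N) = (ϖ₁(N)/ρ_A)·(Q^{−1}(δ)/(2√N) + (B/N)·ln 2)·(1 + K_E/ϖ₂(N)) − 1 is strictly decreasing on (0, ∞), tends to a positive limit (possibly +∞) as N → 0⁺, and tends to −1 as N → ∞; consequently Ξ has a unique zero N* and T is strictly increasing on (0, N*) and strictly decreasing on (N*, ∞), i.e., T is quasi-concave on (0, ∞). -/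
open Real Set Filter Topology

/-- The Gaussian Q-function. -/
noncomputable def gaussQ (z : ℝ) : ℝ :=
  ∫ t in Set.Ioi z, (Real.sqrt (2 * Real.pi))⁻¹ * Real.exp (-t ^ 2 / 2)

lemma gauss_integrable :
    MeasureTheory.Integrable
      (fun t : ℝ => (Real.sqrt (2 * Real.pi))⁻¹ * Real.exp (-t ^ 2 / 2)) := by
  have h := (integrable_exp_neg_mul_sq (by norm_num : (0:ℝ) < 1/2)).const_mul
    (Real.sqrt (2 * Real.pi))⁻¹
  convert h using 2 with t
  ring_nf

lemma gaussQ_zero : gaussQ 0 = 1/2 := by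
  have h2π : (0:ℝ) < Real.sqrt (2*Real.pi) := Real.sqrt_pos.2 (by positivity)
  have : gaussQ 0 = (Real.sqrt (2*Real.pi))⁻¹ *
      ∫ t in Set.Ioi (0:ℝ), Real.exp (-(1/2) * t^2) := by
    rw [gaussQ, MeasureTheory.integral_const_mul]
    congr 1
    apply MeasureTheory.setIntegral_congr_fun (measurableSet_Ioi)
    intro t _; ring_nf
  rw [this, integral_gaussian_Ioi]
  rw [show Real.pi / (1/2) = 2 * Real.pi by ring]
  field_simp

lemma gaussQ_anti : Antitone gaussQ := by
  intro a b hab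
  apply MeasureTheory.setIntegral_mono_set gauss_integrable.integrableOn
  · filter_upwards with t
    positivity
  · exact HasSubset.Subset.eventuallyLE (Set.Ioi_subset_Ioi hab)

lemma gaussQ_inv_pos (δ qδ : ℝ) (hδ : δ < 1/2) (hq : gaussQ qδ = δ) : 0 < qδ := by
  by_contra h
  push_neg at h
  have := gaussQ_anti h
  rw [hq, gaussQ_zero] at this
  linarith

lemma sqrt_tendsto_atTop : Tendsto Real.sqrt atTop atTop := by
  apply tendsto_atTop_atTop.mpr
  intro b
  refine ⟨(max b 0)^2, fun a ha => ?_⟩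
  have h1 : max b 0 ≤ Real.sqrt a := by
    rw [show max b 0 = Real.sqrt ((max b 0)^2) from (Real.sqrt_sq (le_max_right _ _)).symm]
    exact Real.sqrt_le_sqrt ha
  linarith [le_max_left b 0]

/-- Strict antitonicity of the explicit `Ξ` formula. -/
lemma xi_anti (B ρA ρE qδ : ℝ) (K_E : ℕ) (hB : 0 < B) (hρA : 0 < ρA) (hρE : 0 < ρE)
    (hq : 0 < qδ) :
    StrictAntiOn (fun N => Real.exp (qδ / Real.sqrt N + (B / N) * Real.log 2) / ρA *
      (qδ / (2 * Real.sqrt N) + (B / N) * Real.log 2) *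
      (1 + (K_E : ℝ) / (Real.exp (qδ / Real.sqrt N + (B / N) * Real.log 2) / ρA + 1 / ρE)) - 1)
      (Set.Ioi 0) := by
  intro x hx y hy hxy
  simp only [Set.mem_Ioi] at hx hy
  have hl2 : 0 < Real.log 2 := Real.log_pos (by norm_num)
  have hsx : 0 < Real.sqrt x := Real.sqrt_pos.2 hx
  have hsy : 0 < Real.sqrt y := Real.sqrt_pos.2 hy
  have hsxy : Real.sqrt x < Real.sqrt y := Real.sqrt_lt_sqrt hx.le hxy
  set Wx := Real.exp (qδ / Real.sqrt x + (B / x) * Real.log 2) with hWx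
  set Wy := Real.exp (qδ / Real.sqrt y + (B / y) * Real.log 2) with hWy
  have hWxpos : 0 < Wx := Real.exp_pos _
  have hWypos : 0 < Wy := Real.exp_pos _
  have hW : Wy < Wx := by
    rw [hWx, hWy]
    apply Real.exp_lt_exp.2
    have h1 : qδ / Real.sqrt y < qδ / Real.sqrt x := div_lt_div_of_pos_left hq hsx hsxy
    have h2 : (B / y) * Real.log 2 < (B / x) * Real.log 2 :=
      mul_lt_mul_of_pos_right (div_lt_div_of_pos_left hB hx hxy) hl2
    linarith
  have hωx : 0 < Wx / ρA + 1 / ρE := by positivity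
  have hωy : 0 < Wy / ρA + 1 / ρE := by positivity
  have hr : Wy / (Wy / ρA + 1 / ρE) ≤ Wx / (Wx / ρA + 1 / ρE) := by
    rw [div_le_div_iff₀ hωy hωx]
    have h5 : Wy * (1 / ρE) ≤ Wx * (1 / ρE) :=
      mul_le_mul_of_nonneg_right hW.le (by positivity)
    rw [mul_add, mul_add]
    have h6 : Wy * (Wx / ρA) = Wx * (Wy / ρA) := by ring
    linarith
  have hgxy : qδ / (2 * Real.sqrt y) + (B / y) * Real.log 2 <
      qδ / (2 * Real.sqrt x) + (B / x) * Real.log 2 := by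
    have h1 : qδ / (2 * Real.sqrt y) < qδ / (2 * Real.sqrt x) :=
      div_lt_div_of_pos_left hq (by positivity) (by linarith)
    have h2 : (B / y) * Real.log 2 < (B / x) * Real.log 2 :=
      mul_lt_mul_of_pos_right (div_lt_div_of_pos_left hB hx hxy) hl2
    linarith
  have hgy : 0 < qδ / (2 * Real.sqrt y) + (B / y) * Real.log 2 := by positivity
  have hgx : 0 < qδ / (2 * Real.sqrt x) + (B / x) * Real.log 2 := lt_trans hgy hgxy
  -- rewrite into product form
  have hrw : ∀ W g : ℝ, 0 < W →
      W / ρA * g * (1 + (K_E : ℝ) / (W / ρA + 1 / ρE)) =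
      g * (W / ρA + (K_E : ℝ) / ρA * (W / (W / ρA + 1 / ρE))) := by
    intro W g hWp
    have hω : 0 < W / ρA + 1 / ρE := by positivity
    field_simp
  show Wy / ρA * (qδ / (2 * Real.sqrt y) + (B / y) * Real.log 2) *
      (1 + (K_E : ℝ) / (Wy / ρA + 1 / ρE)) - 1 <
    Wx / ρA * (qδ / (2 * Real.sqrt x) + (B / x) * Real.log 2) *
      (1 + (K_E : ℝ) / (Wx / ρA + 1 / ρE)) - 1
  rw [hrw Wx _ hWxpos, hrw Wy _ hWypos]
  have hPxy : Wy / ρA + (K_E : ℝ) / ρA * (Wy / (Wy / ρA + 1 / ρE)) <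
      Wx / ρA + (K_E : ℝ) / ρA * (Wx / (Wx / ρA + 1 / ρE)) := by
    have h6 : Wy / ρA < Wx / ρA := by gcongr
    have h7 := mul_le_mul_of_nonneg_left hr (show (0:ℝ) ≤ (K_E : ℝ) / ρA by positivity)
    linarith
  have hPy : 0 < Wy / ρA + (K_E : ℝ) / ρA * (Wy / (Wy / ρA + 1 / ρE)) := by
    have h8 : 0 < Wy / ρA := div_pos hWypos hρA
    have h9 : 0 ≤ (K_E : ℝ) / ρA * (Wy / (Wy / ρA + 1 / ρE)) := by
      apply mul_nonneg (by positivity) (le_of_lt (div_pos hWypos hωy))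
    linarith
  have hPx : 0 < Wx / ρA + (K_E : ℝ) / ρA * (Wx / (Wx / ρA + 1 / ρE)) := lt_trans hPy hPxy
  have step1 : (qδ / (2 * Real.sqrt y) + (B / y) * Real.log 2) *
      (Wy / ρA + (K_E : ℝ) / ρA * (Wy / (Wy / ρA + 1 / ρE))) <
      (qδ / (2 * Real.sqrt y) + (B / y) * Real.log 2) *
      (Wx / ρA + (K_E : ℝ) / ρA * (Wx / (Wx / ρA + 1 / ρE))) :=
    mul_lt_mul_of_pos_left hPxy hgy
  have step2 : (qδ / (2 * Real.sqrt y) + (B / y) * Real.log 2) *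
      (Wx / ρA + (K_E : ℝ) / ρA * (Wx / (Wx / ρA + 1 / ρE))) <
      (qδ / (2 * Real.sqrt x) + (B / x) * Real.log 2) *
      (Wx / ρA + (K_E : ℝ) / ρA * (Wx / (Wx / ρA + 1 / ρE))) :=
    mul_lt_mul_of_pos_right hgxy hPx
  linarith

/-- Lower bound on the explicit `Ξ` formula near zero. -/
lemma xi_lower (B ρA ρE qδ : ℝ) (K_E : ℕ) (hB : 0 < B) (hρA : 0 < ρA) (hρE : 0 < ρE)
    (hq : 0 < qδ) (N : ℝ) (hN : 0 < N) :
    B * Real.log 2 / ρA * N⁻¹ + (-1) ≤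
    Real.exp (qδ / Real.sqrt N + (B / N) * Real.log 2) / ρA *
      (qδ / (2 * Real.sqrt N) + (B / N) * Real.log 2) *
      (1 + (K_E : ℝ) / (Real.exp (qδ / Real.sqrt N + (B / N) * Real.log 2) / ρA + 1 / ρE)) - 1 := by
  have hl2 : 0 < Real.log 2 := Real.log_pos (by norm_num)
  have hsN : 0 < Real.sqrt N := Real.sqrt_pos.2 hN
  set W := Real.exp (qδ / Real.sqrt N + (B / N) * Real.log 2) with hW
  have hWpos : 0 < W := Real.exp_pos _
  have h1 : 1 ≤ W := by
    rw [hW]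
    have h0 : (0:ℝ) ≤ qδ / Real.sqrt N + (B / N) * Real.log 2 := by positivity
    simpa using Real.exp_le_exp.2 h0
  have hω : 0 < W / ρA + 1 / ρE := by positivity
  have h2 : B / N * Real.log 2 ≤ qδ / (2 * Real.sqrt N) + (B / N) * Real.log 2 :=
    le_add_of_nonneg_left (by positivity)
  have h3 : (1:ℝ) ≤ 1 + (K_E : ℝ) / (W / ρA + 1 / ρE) :=
    le_add_of_nonneg_right (by positivity)
  have key : 1 / ρA * (B / N * Real.log 2) * 1 ≤
      W / ρA * (qδ / (2 * Real.sqrt N) + (B / N) * Real.log 2) *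
      (1 + (K_E : ℝ) / (W / ρA + 1 / ρE)) := by
    have hA : 1 / ρA * (B / N * Real.log 2) ≤
        W / ρA * (qδ / (2 * Real.sqrt N) + (B / N) * Real.log 2) := by
      apply mul_le_mul (by gcongr) h2 (by positivity) (by positivity)
    apply mul_le_mul hA h3 (by norm_num) (by positivity)
  have heq : B * Real.log 2 / ρA * N⁻¹ = 1 / ρA * (B / N * Real.log 2) * 1 := by
    field_simp
  linarith [heq ▸ key]

/-- The explicit `Ξ` formula tends to `-1` at infinity. -/
lemma xi_tendsto_top (B ρA ρE qδ : ℝ) (K_E : ℕ) (hρA : 0 < ρA) (hρE : 0 < ρE) :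
    Tendsto (fun N => Real.exp (qδ / Real.sqrt N + (B / N) * Real.log 2) / ρA *
      (qδ / (2 * Real.sqrt N) + (B / N) * Real.log 2) *
      (1 + (K_E : ℝ) / (Real.exp (qδ / Real.sqrt N + (B / N) * Real.log 2) / ρA + 1 / ρE)) - 1)
      atTop (nhds (-1)) := by
  have t0 : Tendsto (fun N : ℝ => qδ / Real.sqrt N) atTop (nhds 0) :=
    Tendsto.div_atTop tendsto_const_nhds sqrt_tendsto_atTop
  have t1 : Tendsto (fun N : ℝ => (B / N) * Real.log 2) atTop (nhds 0) := by
    have := (Tendsto.div_atTop (tendsto_const_nhds : Tendsto (fun _ : ℝ => B) atTop (nhds B))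
      tendsto_id).mul_const (Real.log 2)
    simpa using this
  have tu : Tendsto (fun N : ℝ => qδ / Real.sqrt N + (B / N) * Real.log 2) atTop (nhds 0) := by
    simpa using t0.add t1
  have tW : Tendsto (fun N : ℝ => Real.exp (qδ / Real.sqrt N + (B / N) * Real.log 2))
      atTop (nhds 1) := by
    have := (Real.continuous_exp.tendsto 0).comp tu
    simpa [Function.comp_def] using this
  have tg : Tendsto (fun N : ℝ => qδ / (2 * Real.sqrt N) + (B / N) * Real.log 2)
      atTop (nhds 0) := by
    have t2 : Tendsto (fun N : ℝ => qδ / (2 * Real.sqrt N)) atTop (nhds 0) :=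
      Tendsto.div_atTop tendsto_const_nhds (Tendsto.const_mul_atTop two_pos sqrt_tendsto_atTop)
    simpa using t2.add t1
  have hc : (0:ℝ) < 1 / ρA + 1 / ρE := by positivity
  have tω : Tendsto (fun N : ℝ =>
      Real.exp (qδ / Real.sqrt N + (B / N) * Real.log 2) / ρA + 1 / ρE)
      atTop (nhds (1 / ρA + 1 / ρE)) := (tW.div_const ρA).add tendsto_const_nhds
  have tfrac : Tendsto (fun N : ℝ =>
      1 + (K_E : ℝ) / (Real.exp (qδ / Real.sqrt N + (B / N) * Real.log 2) / ρA + 1 / ρE))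
      atTop (nhds (1 + (K_E : ℝ) / (1 / ρA + 1 / ρE))) :=
    tendsto_const_nhds.add (Tendsto.div tendsto_const_nhds tω hc.ne')
  have tall := (((tW.div_const ρA).mul tg).mul tfrac).sub_const 1
  have hval : 1 / ρA * 0 * (1 + (K_E : ℝ) / (1 / ρA + 1 / ρE)) - 1 = -1 := by ring
  rw [hval] at tall
  exact tall

/-- Continuity of the explicit `Ξ` formula on positives. -/
lemma xi_contAt (B ρA ρE qδ : ℝ) (K_E : ℕ) (hρA : 0 < ρA) (hρE : 0 < ρE)
    (N : ℝ) (hN : 0 < N) :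
    ContinuousAt (fun N => Real.exp (qδ / Real.sqrt N + (B / N) * Real.log 2) / ρA *
      (qδ / (2 * Real.sqrt N) + (B / N) * Real.log 2) *
      (1 + (K_E : ℝ) / (Real.exp (qδ / Real.sqrt N + (B / N) * Real.log 2) / ρA + 1 / ρE)))
      N := by
  have hsN : 0 < Real.sqrt N := Real.sqrt_pos.2 hN
  have hc1 : ContinuousAt (fun N : ℝ => (B / N) * Real.log 2) N :=
    (continuousAt_const.div continuousAt_id hN.ne').mul continuousAt_const
  have hcu : ContinuousAt (fun N : ℝ => qδ / Real.sqrt N + (B / N) * Real.log 2) N :=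
    (continuousAt_const.div Real.continuous_sqrt.continuousAt hsN.ne').add hc1
  have hcW : ContinuousAt
      (fun N : ℝ => Real.exp (qδ / Real.sqrt N + (B / N) * Real.log 2)) N :=
    Real.continuous_exp.continuousAt.comp hcu
  have hcω : ContinuousAt (fun N : ℝ =>
      Real.exp (qδ / Real.sqrt N + (B / N) * Real.log 2) / ρA + 1 / ρE) N :=
    (hcW.div continuousAt_const hρA.ne').add continuousAt_const
  have hωpos : 0 < Real.exp (qδ / Real.sqrt N + (B / N) * Real.log 2) / ρA + 1 / ρE := by
    have := Real.exp_pos (qδ / Real.sqrt N + (B / N) * Real.log 2)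
    positivity
  have hcg : ContinuousAt (fun N : ℝ => qδ / (2 * Real.sqrt N) + (B / N) * Real.log 2) N :=
    (continuousAt_const.div
      (continuousAt_const.mul Real.continuous_sqrt.continuousAt) (mul_pos two_pos hsN).ne').add hc1
  exact ((hcW.div continuousAt_const hρA.ne').mul hcg).mul
    (continuousAt_const.add (continuousAt_const.div hcω hωpos.ne'))

/-- Derivative of the logarithm of the throughput. -/
lemma logT_hasDerivAt (B ρA ρE qδ : ℝ) (K_E : ℕ) (hρA : 0 < ρA) (hρE : 0 < ρE)
    (N : ℝ) (hN : 0 < N) :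
    HasDerivAt (fun N => Real.log B - Real.log N -
        (K_E : ℝ) * Real.log (ρE * (Real.exp (qδ / Real.sqrt N + (B / N) * Real.log 2) / ρA + 1 / ρE)) -
        (Real.exp (qδ / Real.sqrt N + (B / N) * Real.log 2) - 1) / ρA)
      ((Real.exp (qδ / Real.sqrt N + (B / N) * Real.log 2) / ρA *
        (qδ / (2 * Real.sqrt N) + (B / N) * Real.log 2) *
        (1 + (K_E : ℝ) / (Real.exp (qδ / Real.sqrt N + (B / N) * Real.log 2) / ρA + 1 / ρE)) - 1) / N) N := by
  have hsN : 0 < Real.sqrt N := Real.sqrt_pos.2 hN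
  set w : ℝ := Real.exp (qδ / Real.sqrt N + (B / N) * Real.log 2) with hw
  have hwpos : 0 < w := Real.exp_pos _
  have hw2pos : 0 < w / ρA + 1 / ρE := by positivity
  have hu : HasDerivAt (fun N : ℝ => qδ / Real.sqrt N + (B / N) * Real.log 2)
      (qδ * (-(1 / (2 * Real.sqrt N)) / Real.sqrt N ^ 2) + B * (-(N ^ 2)⁻¹) * Real.log 2) N := by
    have h1 : HasDerivAt (fun N : ℝ => qδ / Real.sqrt N)
        (qδ * (-(1 / (2 * Real.sqrt N)) / Real.sqrt N ^ 2)) N := by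
      simpa [div_eq_mul_inv] using (((Real.hasDerivAt_sqrt hN.ne').inv hsN.ne').const_mul qδ)
    have h2 : HasDerivAt (fun N : ℝ => (B / N) * Real.log 2)
        (B * (-(N ^ 2)⁻¹) * Real.log 2) N := by
      simpa [div_eq_mul_inv, mul_assoc] using
        (((hasDerivAt_inv hN.ne').const_mul B).mul_const (Real.log 2))
    exact h1.add h2
  set u' : ℝ := qδ * (-(1 / (2 * Real.sqrt N)) / Real.sqrt N ^ 2) +
    B * (-(N ^ 2)⁻¹) * Real.log 2 with hu'
  have hw1 : HasDerivAt (fun N : ℝ => Real.exp (qδ / Real.sqrt N + (B / N) * Real.log 2))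
      (w * u') N := by
    simpa [hw, mul_comm] using hu.exp
  have hw2 : HasDerivAt (fun N : ℝ =>
      Real.exp (qδ / Real.sqrt N + (B / N) * Real.log 2) / ρA + 1 / ρE)
      (w * u' / ρA) N := (hw1.div_const ρA).add_const _
  have hlg : HasDerivAt (fun N : ℝ => Real.log (ρE *
      (Real.exp (qδ / Real.sqrt N + (B / N) * Real.log 2) / ρA + 1 / ρE)))
      ((ρE * (w * u' / ρA)) / (ρE * (w / ρA + 1 / ρE))) N :=
    (hw2.const_mul ρE).log (by positivity)
  have hD : HasDerivAt (fun N => Real.log B - Real.log N -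
        (K_E : ℝ) * Real.log (ρE * (Real.exp (qδ / Real.sqrt N + (B / N) * Real.log 2) / ρA + 1 / ρE)) -
        (Real.exp (qδ / Real.sqrt N + (B / N) * Real.log 2) - 1) / ρA)
      (((0 : ℝ) - N⁻¹) - (K_E : ℝ) * ((ρE * (w * u' / ρA)) / (ρE * (w / ρA + 1 / ρE))) -
        (w * u') / ρA) N :=
    (((hasDerivAt_const N (Real.log B)).sub (Real.hasDerivAt_log hN.ne')).sub
      (hlg.const_mul (K_E : ℝ))).sub ((hw1.sub_const 1).div_const ρA)
  convert hD using 1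
  rw [hu']
  rw [Real.sq_sqrt hN.le]
  field_simp
  ring

/-- The throughput as an exponential of its logarithm. -/
lemma T_eq_exp (B ρA ρE qδ : ℝ) (K_E : ℕ) (hB : 0 < B) (hρA : 0 < ρA) (hρE : 0 < ρE)
    (N : ℝ) (hN : 0 < N) :
    B / N * ((ρE * (Real.exp (qδ / Real.sqrt N + (B / N) * Real.log 2) / ρA + 1 / ρE)) ^ K_E)⁻¹ *
      Real.exp (-((Real.exp (qδ / Real.sqrt N + (B / N) * Real.log 2) - 1) / ρA)) =
    Real.exp (Real.log B - Real.log N -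
      (K_E : ℝ) * Real.log (ρE * (Real.exp (qδ / Real.sqrt N + (B / N) * Real.log 2) / ρA + 1 / ρE)) -
      (Real.exp (qδ / Real.sqrt N + (B / N) * Real.log 2) - 1) / ρA) := by
  set w : ℝ := Real.exp (qδ / Real.sqrt N + (B / N) * Real.log 2) with hw
  have hwpos : 0 < w := Real.exp_pos _
  have hω : 0 < w / ρA + 1 / ρE := by positivity
  have hX : 0 < ρE * (w / ρA + 1 / ρE) := mul_pos hρE hω
  rw [show Real.log B - Real.log N - (K_E : ℝ) * Real.log (ρE * (w / ρA + 1 / ρE)) -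
      (w - 1) / ρA =
      (Real.log B - Real.log N) + (-((K_E : ℝ) * Real.log (ρE * (w / ρA + 1 / ρE)))) +
      (-((w - 1) / ρA)) by ring]
  rw [Real.exp_add, Real.exp_add, Real.exp_sub, Real.exp_log hB, Real.exp_log hN,
    Real.exp_neg, Real.exp_neg, Real.exp_nat_mul, Real.exp_log hX]

/-- `Ξ` is strictly decreasing on `(0,∞)`, tends to a positive limit
(possibly `+∞`) as `N → 0⁺`, tends to `−1` as `N → ∞`; hence it has a unique zero
`N*`, and the throughput `T` is strictly increasing before `N*` and strictly
decreasing after, i.e. quasi-concave. -/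
theorem xi_monotone_and_T_quasiconcave (B ρA ρE δ qδ : ℝ) (K_E : ℕ)
    (hB : 0 < B) (hρA : 0 < ρA) (hρE : 0 < ρE) (hK : 1 ≤ K_E)
    (hδ : δ ∈ Set.Ioo (0 : ℝ) (1 / 2)) (hq : gaussQ qδ = δ)
    (ϖ₁ ϖ₂ T Ξ : ℝ → ℝ)
    (hϖ₁ : ϖ₁ = fun N => Real.exp (qδ / Real.sqrt N + (B / N) * Real.log 2))
    (hϖ₂ : ϖ₂ = fun N => ϖ₁ N / ρA + 1 / ρE)
    (hT : T = fun N => (B / N) * ((ρE * ϖ₂ N) ^ K_E)⁻¹ *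
      Real.exp (-((ϖ₁ N - 1) / ρA)))
    (hΞ : Ξ = fun N => (ϖ₁ N / ρA) *
      (qδ / (2 * Real.sqrt N) + (B / N) * Real.log 2) *
      (1 + (K_E : ℝ) / ϖ₂ N) - 1) :
    StrictAntiOn Ξ (Set.Ioi 0) ∧
    (Filter.Tendsto Ξ (nhdsWithin 0 (Set.Ioi 0)) Filter.atTop ∨
      ∃ L : ℝ, 0 < L ∧ Filter.Tendsto Ξ (nhdsWithin 0 (Set.Ioi 0)) (nhds L)) ∧
    Filter.Tendsto Ξ Filter.atTop (nhds (-1)) ∧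
    ∃ Nstar : ℝ, 0 < Nstar ∧ Ξ Nstar = 0 ∧
      (∀ N : ℝ, 0 < N → Ξ N = 0 → N = Nstar) ∧
      StrictMonoOn T (Set.Ioc 0 Nstar) ∧ StrictAntiOn T (Set.Ici Nstar) := by
  have hq0 : 0 < qδ := gaussQ_inv_pos δ qδ hδ.2 hq
  have hl2 : 0 < Real.log 2 := Real.log_pos (by norm_num)
  simp only [hϖ₁] at hϖ₂
  simp only [hϖ₁, hϖ₂] at hΞ hT
  -- Part 1: strict antitonicity
  have part1 : StrictAntiOn Ξ (Set.Ioi 0) := by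
    rw [hΞ]; exact xi_anti B ρA ρE qδ K_E hB hρA hρE hq0
  -- Part 2: tendsto atTop at 0⁺
  have part2 : Filter.Tendsto Ξ (nhdsWithin 0 (Set.Ioi 0)) Filter.atTop := by
    apply tendsto_atTop_mono' _ _
      (tendsto_atTop_add_const_right _ (-1)
        (Tendsto.const_mul_atTop (show (0:ℝ) < B * Real.log 2 / ρA by positivity)
          tendsto_inv_nhdsGT_zero))
    filter_upwards [self_mem_nhdsWithin] with N hN
    rw [hΞ]
    exact xi_lower B ρA ρE qδ K_E hB hρA hρE hq0 N hN
  -- Part 3: tendsto -1 at ∞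
  have part3 : Filter.Tendsto Ξ Filter.atTop (nhds (-1)) := by
    rw [hΞ]; exact xi_tendsto_top B ρA ρE qδ K_E hρA hρE
  refine ⟨part1, Or.inl part2, part3, ?_⟩
  -- Existence of a zero
  have hcont : ∀ N : ℝ, 0 < N → ContinuousAt Ξ N := by
    intro N hN
    rw [hΞ]
    exact (xi_contAt B ρA ρE qδ K_E hρA hρE N hN).sub continuousAt_const
  obtain ⟨N₁, hN₁pos, hN₁⟩ : ∃ N : ℝ, 0 < N ∧ 0 < Ξ N := by
    have h1 : ∀ᶠ N in nhdsWithin 0 (Set.Ioi (0:ℝ)), 0 < Ξ N := part2.eventually_gt_atTop 0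
    have h2 : ∀ᶠ N in nhdsWithin 0 (Set.Ioi (0:ℝ)), N ∈ Set.Ioi (0:ℝ) := self_mem_nhdsWithin
    obtain ⟨N, hN2, hN1⟩ := (h2.and h1).exists
    exact ⟨N, hN2, hN1⟩
  obtain ⟨N₂, hN₂ge, hN₂⟩ : ∃ N : ℝ, N₁ ≤ N ∧ Ξ N < 0 := by
    have h1 : ∀ᶠ N in (atTop : Filter ℝ), Ξ N < 0 :=
      part3.eventually (gt_mem_nhds (by norm_num : (-1:ℝ) < 0))
    have h2 : ∀ᶠ N in (atTop : Filter ℝ), N₁ ≤ N := eventually_ge_atTop N₁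
    obtain ⟨N, hN2, hN1⟩ := (h2.and h1).exists
    exact ⟨N, hN2, hN1⟩
  have hcontIcc : ContinuousOn Ξ (Set.Icc N₁ N₂) := fun z hz =>
    (hcont z (lt_of_lt_of_le hN₁pos hz.1)).continuousWithinAt
  obtain ⟨Nstar, hNstarmem, hNstar⟩ :=
    intermediate_value_Icc' hN₂ge hcontIcc ⟨hN₂.le, hN₁.le⟩
  have hNstarpos : 0 < Nstar := lt_of_lt_of_le hN₁pos hNstarmem.1
  -- derivative facts
  set F : ℝ → ℝ := fun N => Real.log B - Real.log N -
      (K_E : ℝ) * Real.log (ρE * (Real.exp (qδ / Real.sqrt N + (B / N) * Real.log 2) / ρA + 1 / ρE)) -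
      (Real.exp (qδ / Real.sqrt N + (B / N) * Real.log 2) - 1) / ρA with hF
  have hFderiv : ∀ z : ℝ, 0 < z → HasDerivAt F (Ξ z / z) z := by
    intro z hz
    rw [hΞ]
    exact logT_hasDerivAt B ρA ρE qδ K_E hρA hρE z hz
  have hTexp : ∀ N : ℝ, 0 < N → T N = Real.exp (F N) := by
    intro N hN
    rw [hT, hF]
    exact T_eq_exp B ρA ρE qδ K_E hB hρA hρE N hN
  refine ⟨Nstar, hNstarpos, hNstar, ?_, ?_, ?_⟩
  · -- uniqueness
    intro N hN hΞN
    rcases lt_trichotomy N Nstar with h | h | h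
    · have := part1 (Set.mem_Ioi.2 hN) (Set.mem_Ioi.2 hNstarpos) h
      rw [hΞN, hNstar] at this; exact absurd this (lt_irrefl 0)
    · exact h
    · have := part1 (Set.mem_Ioi.2 hNstarpos) (Set.mem_Ioi.2 hN) h
      rw [hΞN, hNstar] at this; exact absurd this (lt_irrefl 0)
  · -- strict mono on Ioc 0 Nstar
    have hmono : StrictMonoOn F (Set.Ioc 0 Nstar) := by
      apply strictMonoOn_of_deriv_pos (convex_Ioc 0 Nstar)
      · exact fun z hz => ((hFderiv z hz.1).continuousAt).continuousWithinAt
      · intro z hz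
        rw [interior_Ioc] at hz
        rw [(hFderiv z hz.1).deriv]
        have : 0 < Ξ z := by
          have := part1 (Set.mem_Ioi.2 hz.1) (Set.mem_Ioi.2 hNstarpos) hz.2
          rwa [hNstar] at this
        exact div_pos this hz.1
    intro x hx y hy hxy
    rw [hTexp x hx.1, hTexp y hy.1]
    exact Real.exp_lt_exp.2 (hmono hx hy hxy)
  · -- strict anti on Ici Nstar
    have hanti : StrictAntiOn F (Set.Ici Nstar) := by
      apply strictAntiOn_of_deriv_neg (convex_Ici Nstar)
      · exact fun z hz =>
          ((hFderiv z (lt_of_lt_of_le hNstarpos hz)).continuousAt).continuousWithinAt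
      · intro z hz
        rw [interior_Ici] at hz
        have hzpos : 0 < z := lt_trans hNstarpos hz
        rw [(hFderiv z hzpos).deriv]
        have : Ξ z < 0 := by
          have := part1 (Set.mem_Ioi.2 hNstarpos) (Set.mem_Ioi.2 hzpos) hz
          rwa [hNstar] at this
        exact div_neg_of_neg_of_pos this hzpos
    intro x hx y hy hxy
    rw [hTexp x (lt_of_lt_of_le hNstarpos hx), hTexp y (lt_of_lt_of_le hNstarpos hy)]
    exact Real.exp_lt_exp.2 (hanti hx hy hxy)
end

section
/- Let P → ∞ with ρ_A = P·a and ρ_E = P·e for fixed a, e > 0, and let ϖ₁ > 0 be fixed. Then the average decoding error probability ε̄(P) = 1 − (ρ_E ϖ₂)^{−K_E} e^{−(ϖ₁−1)/ρ_A} with ϖ₂ = ϖ₁/ρ_A + 1/ρ_E converges as P → ∞ to 1 − (1 + (e/a)·ϖ₁)^{−K_E}, which is strictly positive whenever ϖ₁ > 0. -/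
open Real Filter Topology

/-- in the high-SNR regime `P → ∞` with `ρ_A = P·a`, `ρ_E = P·e`,
the average decoding error probability converges to the strictly positive floor
`1 − (1 + (e/a)·ϖ₁)^{−K_E}`. -/
theorem error_floor_high_SNR (a e ϖ₁ : ℝ) (K_E : ℕ)
    (ha : 0 < a) (he : 0 < e) (hϖ₁ : 0 < ϖ₁) (hK : 1 ≤ K_E) :
    Filter.Tendsto
      (fun P : ℝ =>
        1 - (((P * e) * (ϖ₁ / (P * a) + 1 / (P * e))) ^ K_E)⁻¹ *
          Real.exp (-((ϖ₁ - 1) / (P * a))))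
      Filter.atTop (nhds (1 - ((1 + (e / a) * ϖ₁) ^ K_E)⁻¹)) ∧
    0 < 1 - ((1 + (e / a) * ϖ₁) ^ K_E)⁻¹ := by
  constructor
  · -- exponent tends to 0
    have h0 : Tendsto (fun P : ℝ => -((ϖ₁ - 1) / (P * a))) atTop (nhds 0) := by
      have : Tendsto (fun P : ℝ => (ϖ₁ - 1) / (P * a)) atTop (nhds 0) := by
        have hmul : Tendsto (fun P : ℝ => P * a) atTop atTop :=
          Tendsto.atTop_mul_const ha tendsto_id
        exact Tendsto.const_div_atTop hmul (ϖ₁ - 1)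
      simpa using this.neg
    have hexp : Tendsto (fun P : ℝ => Real.exp (-((ϖ₁ - 1) / (P * a)))) atTop (nhds 1) := by
      simpa [Function.comp_def] using (Real.continuous_exp.continuousAt.tendsto.comp h0)
    have hmain : Tendsto
        (fun P : ℝ => 1 - ((1 + (e / a) * ϖ₁) ^ K_E)⁻¹ * Real.exp (-((ϖ₁ - 1) / (P * a))))
        atTop (nhds (1 - ((1 + (e / a) * ϖ₁) ^ K_E)⁻¹)) := by
      have := (tendsto_const_nhds.sub ((tendsto_const_nhds.mul hexp))
        : Tendsto (fun P : ℝ => 1 - ((1 + (e / a) * ϖ₁) ^ K_E)⁻¹ * Real.exp (-((ϖ₁ - 1) / (P * a))))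
          atTop (nhds (1 - ((1 + (e / a) * ϖ₁) ^ K_E)⁻¹ * 1)))
      simpa using this
    refine hmain.congr' ?_
    filter_upwards [eventually_gt_atTop (0 : ℝ)] with P hP
    have hPa : P * a ≠ 0 := by positivity
    have hPe : P * e ≠ 0 := by positivity
    have : (P * e) * (ϖ₁ / (P * a) + 1 / (P * e)) = 1 + (e / a) * ϖ₁ := by
      field_simp
      ring
    rw [this]
  · have hbase : (1 : ℝ) < 1 + (e / a) * ϖ₁ := by
      have : 0 < (e / a) * ϖ₁ := by positivity
      linarith
    have h1 : (1 : ℝ) < (1 + (e / a) * ϖ₁) ^ K_E := one_lt_pow₀ hbase (by omega)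
    have h2 : ((1 + (e / a) * ϖ₁) ^ K_E)⁻¹ < 1 := by
      rw [inv_lt_one_iff₀]; right; exact h1
    linarith
end

section
/- For positive integers K_A > 1 and K_E with K_E < K_A, real η ∈ (0,1), ρ_E > 0, and τ = (η^{−1} − 1)/(K_A − 1), the function F(x) = 1 − e^{−x/(ηρ_E)} Σ_{n=1}^{K_E} (A_n(x)/(n−1)!)·(x/(ηρ_E))^{n−1} with A_n(x) = Σ_{m=0}^{K_E−n} C(K_A−1, m)(τx)^m / (1+τx)^{K_A−1} is a cumulative distribution function on [0,∞): F(0) = 0, F is nondecreasing, and lim_{x→∞} F(x) = 1. -/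
open Real Set Filter Topology

private lemma hasDerivAt_U (K m : ℕ) (τ x : ℝ) (hy : 0 < 1 + τ * x)
    (hK : 1 ≤ K) (hm : m ≤ K) :
    HasDerivAt (fun x : ℝ => (τ * x) ^ m / (1 + τ * x) ^ K)
      ((τ * ((m : ℝ) * (τ * x) ^ (m - 1)) - τ * (((K - m : ℕ) : ℝ) * (τ * x) ^ m))
        / (1 + τ * x) ^ (K + 1)) x := by
  have hnum : HasDerivAt (fun x : ℝ => (τ * x) ^ m) ((m : ℝ) * (τ * x) ^ (m - 1) * τ) x := by
    simpa using ((hasDerivAt_id x).const_mul τ).fun_pow m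
  have hden : HasDerivAt (fun x : ℝ => (1 + τ * x) ^ K) ((K : ℝ) * (1 + τ * x) ^ (K - 1) * τ) x := by
    simpa using (((hasDerivAt_id x).const_mul τ).const_add 1).fun_pow K
  have h := hnum.fun_div hden (pow_ne_zero K hy.ne')
  refine h.congr_deriv (Eq.symm ?_)
  have hyne : (1 + τ * x) ≠ 0 := hy.ne'
  obtain ⟨K', rfl⟩ : ∃ K', K = K' + 1 := ⟨K - 1, by omega⟩
  rw [Nat.cast_sub hm]
  push_cast
  rcases m with _ | m'
  · simp only [Nat.zero_eq, pow_zero, Nat.cast_zero]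
    field_simp
    ring
  · simp only [Nat.add_sub_cancel, Nat.succ_sub_one]
    push_cast
    field_simp
    ring

private lemma hasDerivAt_V (J : ℕ) (s x : ℝ) (hs : 0 < s) (hJ : 1 ≤ J) :
    HasDerivAt (fun x : ℝ => Real.exp (-x / s) * ∑ n ∈ Finset.range J, (x / s) ^ n / (n.factorial : ℝ))
      (Real.exp (-x / s) * (1 / s) *
        ((∑ n ∈ Finset.range (J - 1), (x / s) ^ n / (n.factorial : ℝ)) -
          ∑ n ∈ Finset.range J, (x / s) ^ n / (n.factorial : ℝ))) x := by
  have hexp : HasDerivAt (fun x : ℝ => Real.exp (-x / s)) (Real.exp (-x / s) * (-(1 / s))) x := by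
    have h1 : HasDerivAt (fun x : ℝ => -x / s) (-(1 / s)) x := by
      simpa [neg_div] using ((hasDerivAt_id x).div_const s).fun_neg
    exact h1.exp
  have hsum : HasDerivAt (fun x : ℝ => ∑ n ∈ Finset.range J, (x / s) ^ n / (n.factorial : ℝ))
      ((1 / s) * ∑ n ∈ Finset.range (J - 1), (x / s) ^ n / (n.factorial : ℝ)) x := by
    have hterm : ∀ n : ℕ, HasDerivAt (fun x : ℝ => (x / s) ^ n / (n.factorial : ℝ))
        (((n : ℝ) * (x / s) ^ (n - 1) * (1 / s)) / (n.factorial : ℝ)) x := by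
      intro n
      simpa [one_div] using (((hasDerivAt_id x).div_const s).pow n).div_const (n.factorial : ℝ)
    have h := HasDerivAt.fun_sum (u := Finset.range J) (fun n _ => hterm n)
    refine h.congr_deriv (Eq.symm ?_)
    obtain ⟨J', rfl⟩ : ∃ J', J = J' + 1 := ⟨J - 1, by omega⟩
    rw [Finset.sum_range_succ' (fun n => ((n : ℝ) * (x / s) ^ (n - 1) * (1 / s)) / (n.factorial : ℝ)) J']
    simp only [Nat.add_sub_cancel, Nat.cast_zero, zero_mul, Nat.factorial_zero, Nat.cast_one,
      div_one, zero_div, add_zero, pow_zero]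
    rw [Finset.mul_sum]
    refine Finset.sum_congr rfl fun n _ => ?_
    have hfne : ((n.factorial : ℝ)) ≠ 0 := Nat.cast_ne_zero.mpr n.factorial_ne_zero
    rw [Nat.factorial_succ]
    push_cast
    field_simp
  have h := hexp.fun_mul hsum
  refine h.congr_deriv (Eq.symm ?_)
  ring

private lemma sum_range_swap (N : ℕ) (f : ℕ → ℕ → ℝ) :
    ∑ n ∈ Finset.range N, ∑ m ∈ Finset.range (N - n), f n m
      = ∑ m ∈ Finset.range N, ∑ n ∈ Finset.range (N - m), f n m := by
  have key : ∀ (g : ℕ → ℕ → ℝ) (n : ℕ),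
      ∑ m ∈ Finset.range (N - n), g n m
        = ∑ m ∈ Finset.range N, if n + m < N then g n m else 0 := by
    intro g n
    rw [← Finset.sum_filter]
    apply Finset.sum_congr _ (fun _ _ => rfl)
    ext m
    simp only [Finset.mem_filter, Finset.mem_range]
    omega
  calc ∑ n ∈ Finset.range N, ∑ m ∈ Finset.range (N - n), f n m
      = ∑ n ∈ Finset.range N, ∑ m ∈ Finset.range N, if n + m < N then f n m else 0 :=
        Finset.sum_congr rfl fun n _ => key f n
    _ = ∑ m ∈ Finset.range N, ∑ n ∈ Finset.range N, if n + m < N then f n m else 0 :=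
        Finset.sum_comm
    _ = ∑ m ∈ Finset.range N, ∑ n ∈ Finset.range (N - m), f n m := by
        refine Finset.sum_congr rfl fun m _ => ?_
        rw [key (fun m n => f n m) m]
        exact Finset.sum_congr rfl fun n _ => by rw [Nat.add_comm]

private lemma G_deriv_nonpos (K KE : ℕ) (τ s : ℝ) (hK : 1 ≤ K) (hKE : 1 ≤ KE)
    (hKEK : KE ≤ K) (hτ : 0 < τ) (hs : 0 < s) (x : ℝ) (hx : 0 ≤ x) :
    (∑ m ∈ Finset.range KE,
      ((K.choose m : ℝ) * ((τ * ((m : ℝ) * (τ * x) ^ (m - 1)) -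
          τ * (((K - m : ℕ) : ℝ) * (τ * x) ^ m)) / (1 + τ * x) ^ (K + 1)) *
        (Real.exp (-x / s) * ∑ n ∈ Finset.range (KE - m), (x / s) ^ n / (n.factorial : ℝ))
      + (K.choose m : ℝ) * ((τ * x) ^ m / (1 + τ * x) ^ K) *
        (Real.exp (-x / s) * (1 / s) *
          ((∑ n ∈ Finset.range (KE - m - 1), (x / s) ^ n / (n.factorial : ℝ)) -
            ∑ n ∈ Finset.range (KE - m), (x / s) ^ n / (n.factorial : ℝ))))) ≤ 0 := by
  have hy : (0 : ℝ) < 1 + τ * x := by positivity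
  set t : ℕ → ℝ := fun n => (x / s) ^ n / (n.factorial : ℝ) with ht_def
  have ht : ∀ n, 0 ≤ t n := fun n => by positivity
  set E : ℕ → ℝ := fun J => ∑ n ∈ Finset.range J, t n with hE_def
  have hE : ∀ J, 0 ≤ E J := fun J => Finset.sum_nonneg fun n _ => ht n
  have hEmono : ∀ {J J' : ℕ}, J ≤ J' → E J ≤ E J' := fun h =>
    Finset.sum_le_sum_of_subset_of_nonneg (Finset.range_subset_range.mpr h) (fun n _ _ => ht n)
  rw [Finset.sum_add_distrib]
  have hb : (∑ m ∈ Finset.range KE,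
      (K.choose m : ℝ) * ((τ * x) ^ m / (1 + τ * x) ^ K) *
        (Real.exp (-x / s) * (1 / s) * (E (KE - m - 1) - E (KE - m)))) ≤ 0 := by
    apply Finset.sum_nonpos
    intro m _
    apply mul_nonpos_of_nonneg_of_nonpos
    · positivity
    · apply mul_nonpos_of_nonneg_of_nonpos (by positivity)
      exact sub_nonpos.mpr (hEmono (Nat.sub_le _ _))
  have ha : (∑ m ∈ Finset.range KE,
      (K.choose m : ℝ) * ((τ * ((m : ℝ) * (τ * x) ^ (m - 1)) -
          τ * (((K - m : ℕ) : ℝ) * (τ * x) ^ m)) / (1 + τ * x) ^ (K + 1)) *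
        (Real.exp (-x / s) * E (KE - m))) ≤ 0 := by
    have hrw : ∀ m ∈ Finset.range KE,
        (K.choose m : ℝ) * ((τ * ((m : ℝ) * (τ * x) ^ (m - 1)) -
            τ * (((K - m : ℕ) : ℝ) * (τ * x) ^ m)) / (1 + τ * x) ^ (K + 1)) *
          (Real.exp (-x / s) * E (KE - m))
        = τ / (1 + τ * x) ^ (K + 1) *
            (((K.choose m : ℝ) * (m : ℝ)) * ((τ * x) ^ (m - 1) * (Real.exp (-x / s) * E (KE - m)))
             - ((K.choose m : ℝ) * ((K - m : ℕ) : ℝ)) * ((τ * x) ^ m * (Real.exp (-x / s) * E (KE - m)))) := by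
      intro m _
      ring
    rw [Finset.sum_congr rfl hrw, ← Finset.mul_sum, Finset.sum_sub_distrib]
    apply mul_nonpos_of_nonneg_of_nonpos (by positivity)
    rw [sub_nonpos]
    obtain ⟨N, rfl⟩ : ∃ N, KE = N + 1 := ⟨KE - 1, by omega⟩
    rw [Finset.sum_range_succ']
    have h0 : ((K.choose 0 : ℝ) * ((0 : ℕ) : ℝ)) *
        ((τ * x) ^ (0 - 1) * (Real.exp (-x / s) * E (N + 1 - 0))) = 0 := by simp
    rw [h0, add_zero]
    have hchoose : ∀ m : ℕ, (K.choose (m + 1) : ℝ) * ((m + 1 : ℕ) : ℝ)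
        = (K : ℝ) * ((K - 1).choose m : ℝ) := by
      intro m
      have := Nat.add_one_mul_choose_eq (K - 1) m
      rw [Nat.sub_add_cancel hK] at this
      exact_mod_cast this.symm
    have hchoose2 : ∀ m : ℕ, (K.choose m : ℝ) * (((K - m : ℕ)) : ℝ)
        = (K : ℝ) * ((K - 1).choose m : ℝ) := by
      intro m
      have := Nat.choose_mul_succ_eq (K - 1) m
      rw [Nat.sub_add_cancel hK] at this
      rw [mul_comm (K : ℝ)]
      exact_mod_cast this.symm
    calc ∑ m ∈ Finset.range N,
          (K.choose (m + 1) : ℝ) * (((m + 1 : ℕ)) : ℝ) *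
            ((τ * x) ^ (m + 1 - 1) * (Real.exp (-x / s) * E (N + 1 - (m + 1))))
        ≤ ∑ m ∈ Finset.range N,
          (K.choose m : ℝ) * (((K - m : ℕ)) : ℝ) *
            ((τ * x) ^ m * (Real.exp (-x / s) * E (N + 1 - m))) := by
          apply Finset.sum_le_sum
          intro m _
          rw [hchoose, hchoose2, Nat.add_sub_cancel]
          have : N + 1 - (m + 1) ≤ N + 1 - m := by omega
          have hEle := hEmono this
          apply mul_le_mul_of_nonneg_left _ (by positivity)
          apply mul_le_mul_of_nonneg_left _ (by positivity)
          exact mul_le_mul_of_nonneg_left hEle (by positivity)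
      _ ≤ ∑ m ∈ Finset.range (N + 1),
          (K.choose m : ℝ) * (((K - m : ℕ)) : ℝ) *
            ((τ * x) ^ m * (Real.exp (-x / s) * E (N + 1 - m))) := by
          apply Finset.sum_le_sum_of_subset_of_nonneg (Finset.range_subset_range.mpr (Nat.le_succ N))
          intro m _ _
          positivity
  calc _ ≤ (0 : ℝ) + 0 := add_le_add ha hb
    _ = 0 := by simp

private lemma G_antitone (K KE : ℕ) (τ s : ℝ) (hK : 1 ≤ K) (hKE : 1 ≤ KE)
    (hKEK : KE ≤ K) (hτ : 0 < τ) (hs : 0 < s) :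
    AntitoneOn (fun x : ℝ => ∑ m ∈ Finset.range KE,
      (K.choose m : ℝ) * ((τ * x) ^ m / (1 + τ * x) ^ K) *
        (Real.exp (-x / s) * ∑ n ∈ Finset.range (KE - m), (x / s) ^ n / (n.factorial : ℝ)))
      (Set.Ici 0) := by
  set g : ℝ → ℝ := fun x => ∑ m ∈ Finset.range KE,
      (K.choose m : ℝ) * ((τ * x) ^ m / (1 + τ * x) ^ K) *
        (Real.exp (-x / s) * ∑ n ∈ Finset.range (KE - m), (x / s) ^ n / (n.factorial : ℝ))
    with hg_def
  set D : ℝ → ℝ := fun x => ∑ m ∈ Finset.range KE,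
      ((K.choose m : ℝ) * ((τ * ((m : ℝ) * (τ * x) ^ (m - 1)) -
          τ * (((K - m : ℕ) : ℝ) * (τ * x) ^ m)) / (1 + τ * x) ^ (K + 1)) *
        (Real.exp (-x / s) * ∑ n ∈ Finset.range (KE - m), (x / s) ^ n / (n.factorial : ℝ))
      + (K.choose m : ℝ) * ((τ * x) ^ m / (1 + τ * x) ^ K) *
        (Real.exp (-x / s) * (1 / s) *
          ((∑ n ∈ Finset.range (KE - m - 1), (x / s) ^ n / (n.factorial : ℝ)) -
            ∑ n ∈ Finset.range (KE - m), (x / s) ^ n / (n.factorial : ℝ)))) with hD_def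
  have hg : ∀ x : ℝ, 0 ≤ x → HasDerivAt g (D x) x := by
    intro x hx
    have hy : (0 : ℝ) < 1 + τ * x := by positivity
    apply HasDerivAt.fun_sum
    intro m hm
    have hmK : m ≤ K := le_trans (Nat.le_of_lt_succ (Nat.lt_succ_of_lt (Finset.mem_range.mp hm))) hKEK
    have hJ : 1 ≤ KE - m := by
      have := Finset.mem_range.mp hm; omega
    have hU := (hasDerivAt_U K m τ x hy hK hmK).const_mul (K.choose m : ℝ)
    have hV := hasDerivAt_V (KE - m) s x hs hJ
    exact hU.fun_mul hV
  apply antitoneOn_of_deriv_nonpos (convex_Ici 0)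
  · exact fun x hx => (hg x hx).continuousAt.continuousWithinAt
  · intro x hx
    rw [interior_Ici] at hx
    exact (hg x (le_of_lt hx)).differentiableAt.differentiableWithinAt
  · intro x hx
    rw [interior_Ici] at hx
    rw [(hg x (le_of_lt hx)).deriv]
    exact G_deriv_nonpos K KE τ s hK hKE hKEK hτ hs x (le_of_lt hx)

/-- the function `F` of Lemma 2 (the CDF of the eavesdropper's
SINR under AN-aided transmission, case `K_E < K_A`) is a genuine CDF on
`[0, ∞)`: it vanishes at `0`, is nondecreasing, and tends to `1` at infinity. -/
theorem sinr_cdf_is_cdf (K_A K_E : ℕ) (η ρE : ℝ)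
    (hKA : 1 < K_A) (hKE : 1 ≤ K_E) (hKEA : K_E < K_A)
    (hη : η ∈ Set.Ioo (0 : ℝ) 1) (hρE : 0 < ρE)
    (τ : ℝ) (hτ : τ = (η⁻¹ - 1) / ((K_A : ℝ) - 1))
    (A : ℕ → ℝ → ℝ)
    (hA : A = fun (n : ℕ) (x : ℝ) =>
      (∑ m ∈ Finset.range (K_E - n + 1), ((K_A - 1).choose m : ℝ) * (τ * x) ^ m) /
        (1 + τ * x) ^ (K_A - 1))
    (F : ℝ → ℝ)
    (hF : F = fun x : ℝ =>
      1 - Real.exp (-x / (η * ρE)) *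
        ∑ n ∈ Finset.range K_E, (A (n + 1) x / (n.factorial : ℝ)) *
          (x / (η * ρE)) ^ n) :
    F 0 = 0 ∧ MonotoneOn F (Set.Ici 0) ∧
      Filter.Tendsto F Filter.atTop (nhds 1) := by
  obtain ⟨hη0, hη1⟩ := hη
  set s : ℝ := η * ρE with hs_def
  have hs : 0 < s := mul_pos hη0 hρE
  set K : ℕ := K_A - 1 with hK_def
  have hK : 1 ≤ K := by omega
  have hKEK : K_E ≤ K := by omega
  have hτ0 : 0 < τ := by
    rw [hτ]
    apply div_pos
    · have : 1 < η⁻¹ := (one_lt_inv₀ hη0).mpr hη1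
      linarith
    · have : (1 : ℝ) < (K_A : ℝ) := by exact_mod_cast hKA
      linarith
  -- the swapped form of 1 - F
  have hFg : ∀ x : ℝ, F x = 1 - ∑ m ∈ Finset.range K_E,
      (K.choose m : ℝ) * ((τ * x) ^ m / (1 + τ * x) ^ K) *
        (Real.exp (-x / s) * ∑ n ∈ Finset.range (K_E - m), (x / s) ^ n / (n.factorial : ℝ)) := by
    intro x
    rw [hF]
    simp only
    congr 1
    rw [Finset.mul_sum]
    calc ∑ n ∈ Finset.range K_E,
          Real.exp (-x / s) * ((A (n + 1) x / (n.factorial : ℝ)) * (x / s) ^ n)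
        = ∑ n ∈ Finset.range K_E, ∑ m ∈ Finset.range (K_E - n),
            (K.choose m : ℝ) * ((τ * x) ^ m / (1 + τ * x) ^ K) *
              (Real.exp (-x / s) * ((x / s) ^ n / (n.factorial : ℝ))) := by
          refine Finset.sum_congr rfl fun n hn => ?_
          have hn' := Finset.mem_range.mp hn
          rw [hA]
          simp only
          have hrange : K_E - (n + 1) + 1 = K_E - n := by omega
          rw [hrange]
          rw [Finset.sum_div, Finset.sum_div, Finset.sum_mul, Finset.mul_sum]
          refine Finset.sum_congr rfl fun m _ => ?_
          ring
      _ = ∑ m ∈ Finset.range K_E, ∑ n ∈ Finset.range (K_E - m),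
            (K.choose m : ℝ) * ((τ * x) ^ m / (1 + τ * x) ^ K) *
              (Real.exp (-x / s) * ((x / s) ^ n / (n.factorial : ℝ))) :=
          sum_range_swap K_E _
      _ = ∑ m ∈ Finset.range K_E,
            (K.choose m : ℝ) * ((τ * x) ^ m / (1 + τ * x) ^ K) *
              (Real.exp (-x / s) * ∑ n ∈ Finset.range (K_E - m), (x / s) ^ n / (n.factorial : ℝ)) := by
          refine Finset.sum_congr rfl fun m _ => ?_
          rw [Finset.mul_sum, Finset.mul_sum]
  -- bounds on A
  have hA_nonneg : ∀ (n : ℕ) (x : ℝ), 0 ≤ x → 0 ≤ A (n + 1) x := by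
    intro n x hx
    rw [hA]
    simp only
    apply div_nonneg
    · exact Finset.sum_nonneg fun m _ => by positivity
    · positivity
  have hA_le_one : ∀ (n : ℕ) (x : ℝ), 0 ≤ x → A (n + 1) x ≤ 1 := by
    intro n x hx
    rw [hA]
    simp only
    have hy : (0 : ℝ) < 1 + τ * x := by positivity
    rw [div_le_one (by positivity)]
    have hexpand : (1 + τ * x) ^ (K_A - 1)
        = ∑ m ∈ Finset.range (K_A - 1 + 1), ((K_A - 1).choose m : ℝ) * (τ * x) ^ m := by
      rw [add_comm (1 : ℝ) (τ * x), add_pow]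
      refine Finset.sum_congr rfl fun m _ => ?_
      rw [one_pow]
      ring
    rw [hexpand]
    apply Finset.sum_le_sum_of_subset_of_nonneg
    · apply Finset.range_subset_range.mpr
      omega
    · intro m _ _
      positivity
  constructor
  · -- F 0 = 0
    rw [hF]
    simp only
    have hsum0 : ∑ n ∈ Finset.range K_E, (A (n + 1) 0 / (n.factorial : ℝ)) * (0 / s) ^ n
        = A 1 0 := by
      rw [Finset.sum_eq_single 0]
      · simp
      · intro n _ hn0
        rw [zero_div, zero_pow hn0, mul_zero]
      · intro h
        exact absurd (Finset.mem_range.mpr (by omega)) h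
    rw [hsum0]
    have hA10 : A 1 0 = 1 := by
      rw [hA]
      simp only [mul_zero]
      rw [Finset.sum_eq_single 0]
      · simp
      · intro m _ hm0
        rw [zero_pow hm0, mul_zero]
      · intro h
        exact absurd (Finset.mem_range.mpr (by omega)) h
    rw [hA10]
    simp
  constructor
  · -- monotone
    have hmono := G_antitone K K_E τ s hK hKE hKEK hτ0 hs
    intro a ha b hb hab
    rw [hFg a, hFg b]
    have := hmono ha hb hab
    linarith
  · -- limit
    have hH : Filter.Tendsto (fun x : ℝ => Real.exp (-x / s) *
        ∑ n ∈ Finset.range K_E, (A (n + 1) x / (n.factorial : ℝ)) * (x / s) ^ n)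
        Filter.atTop (nhds 0) := by
      have hBtend : Filter.Tendsto (fun x : ℝ =>
          ∑ n ∈ Finset.range K_E, (x / s) ^ n * Real.exp (-(x / s)) / (n.factorial : ℝ))
          Filter.atTop (nhds 0) := by
        have h0 : (0 : ℝ) = ∑ n ∈ Finset.range K_E, 0 := by simp
        rw [h0]
        apply tendsto_finset_sum
        intro n _
        have h1 : Filter.Tendsto (fun x : ℝ => x / s) Filter.atTop Filter.atTop :=
          Filter.tendsto_id.atTop_div_const hs
        have h2 := (tendsto_pow_mul_exp_neg_atTop_nhds_zero n).comp h1
        have h3 := h2.div_const (n.factorial : ℝ)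
        simpa using h3
      apply squeeze_zero' (g := fun x : ℝ =>
          ∑ n ∈ Finset.range K_E, (x / s) ^ n * Real.exp (-(x / s)) / (n.factorial : ℝ))
      · filter_upwards [Filter.eventually_ge_atTop (0 : ℝ)] with x hx
        apply mul_nonneg (Real.exp_nonneg _)
        apply Finset.sum_nonneg
        intro n _
        have := hA_nonneg n x hx
        positivity
      · filter_upwards [Filter.eventually_ge_atTop (0 : ℝ)] with x hx
        rw [Finset.mul_sum]
        apply Finset.sum_le_sum
        intro n _
        have h1 := hA_le_one n x hx
        have h0 := hA_nonneg n x hx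
        have hxs : (0 : ℝ) ≤ x / s := by positivity
        have hexp : Real.exp (-x / s) = Real.exp (-(x / s)) := by rw [neg_div]
        rw [hexp]
        calc Real.exp (-(x / s)) * ((A (n + 1) x / (n.factorial : ℝ)) * (x / s) ^ n)
            ≤ Real.exp (-(x / s)) * ((1 / (n.factorial : ℝ)) * (x / s) ^ n) := by
              apply mul_le_mul_of_nonneg_left _ (Real.exp_nonneg _)
              apply mul_le_mul_of_nonneg_right _ (by positivity)
              exact div_le_div_of_nonneg_right h1 (Nat.cast_nonneg _)
          _ = (x / s) ^ n * Real.exp (-(x / s)) / (n.factorial : ℝ) := by ring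
      · exact hBtend
    rw [hF]
    have := tendsto_const_nhds (α := ℝ) (x := (1 : ℝ)) (f := Filter.atTop) |>.sub hH
    simpa using this
end
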